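/- Let k₊ > 0 and let a₀, a₁, a₂ ∈ ℝ with a₀ ≥ 0, a₁ > 0 and a₂ ≥ 0. Define f(s) := a₀ + a₁·P(s) + a₂·Q(s) and w₀ := a₁√k₊/√(a₁² + a₂²). Then for every s ∈ ℂ with −w₀ < Im s < √k₊, the value f(s) is not a nonpositive real number, i.e. f(s) ∉ {t ∈ ℝ : t ≤ 0}. -/

import Mathlib

open Complex Set

noncomputable section

/-- Principal square root on ℂ via the principal power. -/
def csqrt (z : ℂ) : ℂ := z ^ (1/2 : ℂ)

def Pf (kp : ℝ) (s : ℂ) : ℂ := csqrt (1 - s ^ 2 / (2 * (kp : ℂ) * Complex.I))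

def Qf (kp : ℝ) (s : ℂ) : ℂ :=
  s * Complex.exp (-(Real.pi : ℂ) / 4 * Complex.I) / (Real.sqrt (2 * kp) : ℂ)

/-!
Put ζ := Q(s). Then ζ² = s²/(2k₊i), so P(s) = √(1 - ζ²) and f(s) = a₀ + a₁√(1 - ζ²) + a₂ζ,
while s = √k₊ (1 + i) ζ gives Im s = √k₊ (Re ζ + Im ζ). Write ζ = u + iv and √(1 - ζ²) = p + iq
with p ≥ 0. If f(s) is real, a₁q = -a₂v, and comparing with pq = -uv gives v (a₂p - a₁u) = 0.
If a₂p = a₁u, then f(s) ≤ 0 forces (a₁² + a₂²) p ≤ 0, so p = u = 0, which contradicts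
p² - q² = 1 - u² + v². If v = 0, then q = 0 and p = √(1 - u²), and a₁p ≤ -a₂u forces u = 1 or
u ≤ -a₁/√(a₁² + a₂²): exactly the two boundary lines of the strip.
-/

lemma csqrt_sq (z : ℂ) : csqrt z ^ 2 = z := by
  rw [csqrt, one_div]
  exact cpow_ofNat_inv_pow z 2

lemma re_csqrt_nonneg (z : ℂ) : 0 ≤ (csqrt z).re := by
  rw [csqrt, one_div, cpow_inv_two_re]
  exact Real.sqrt_nonneg _

lemma exp_neg_pi_div_four_mul_I :
    exp (-(Real.pi : ℂ) / 4 * I) = ((Real.sqrt 2 / 2 : ℝ) : ℂ) * (1 - I) := by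
  have h : -(Real.pi : ℂ) / 4 = ((-(Real.pi / 4) : ℝ) : ℂ) := by push_cast; ring
  rw [exp_mul_I, h, ← ofReal_cos, ← ofReal_sin, Real.cos_neg, Real.sin_neg,
    Real.cos_pi_div_four, Real.sin_pi_div_four]
  push_cast
  ring

lemma Qf_eq (kp : ℝ) (s : ℂ) :
    Qf kp s = s * (1 - I) / (2 * (Real.sqrt kp : ℂ)) := by
  have hsq : (Real.sqrt 2 : ℂ) ^ 2 = 2 := by exact_mod_cast Real.sq_sqrt zero_le_two
  rw [Qf, exp_neg_pi_div_four_mul_I, Real.sqrt_mul zero_le_two]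
  push_cast
  field_simp

lemma Qf_sq {kp : ℝ} (hkp : 0 < kp) (s : ℂ) :
    Qf kp s ^ 2 = s ^ 2 / (2 * (kp : ℂ) * I) := by
  have hk : (Real.sqrt kp : ℂ) ^ 2 = kp := by exact_mod_cast Real.sq_sqrt hkp.le
  have hk0 : (kp : ℂ) ≠ 0 := by exact_mod_cast hkp.ne'
  rw [Qf_eq, div_pow, mul_pow, mul_pow, hk]
  field_simp
  linear_combination s ^ 2 * (I - 2) * I_sq

lemma Pf_eq_csqrt_one_sub_Qf_sq {kp : ℝ} (hkp : 0 < kp) (s : ℂ) :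
    Pf kp s = csqrt (1 - Qf kp s ^ 2) := by
  rw [Pf, Qf_sq hkp]

lemma eq_sqrt_mul_one_add_I_mul_Qf {kp : ℝ} (hkp : 0 < kp) (s : ℂ) :
    s = Real.sqrt kp * (1 + I) * Qf kp s := by
  have hk : (Real.sqrt kp : ℂ) ≠ 0 := by exact_mod_cast (Real.sqrt_pos.2 hkp).ne'
  rw [Qf_eq]
  field_simp
  linear_combination s * I_sq

lemma im_eq_sqrt_mul_Qf {kp : ℝ} (hkp : 0 < kp) (s : ℂ) :
    s.im = Real.sqrt kp * ((Qf kp s).re + (Qf kp s).im) := by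
  conv_lhs => rw [eq_sqrt_mul_one_add_I_mul_Qf hkp s]
  simp only [mul_im, mul_re, add_re, add_im, ofReal_re, ofReal_im, one_re, one_im, I_re, I_im]
  ring

lemma add_le_neg_div_of_sq_eq_one_sub_sq {a0 a1 a2 p q u v : ℝ} (ha0 : 0 ≤ a0) (ha1 : 0 < a1)
    (ha2 : 0 ≤ a2) (hp : 0 ≤ p) (hre : p ^ 2 - q ^ 2 = 1 - u ^ 2 + v ^ 2) (him : p * q = -(u * v))
    (hfim : a1 * q + a2 * v = 0) (hfre : a0 + a1 * p + a2 * u ≤ 0) (hlt : u + v < 1) :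
    u + v ≤ -(a1 / Real.sqrt (a1 ^ 2 + a2 ^ 2)) := by
  have hvq : v * (a2 * p - a1 * u) = 0 := by linear_combination p * hfim - a1 * him
  rcases mul_eq_zero.1 hvq with rfl | hpu
  · have hq : q = 0 := by nlinarith
    subst hq
    have hu : u < 0 := by
      by_contra! hu
      have : p = 0 := by nlinarith
      nlinarith
    have hW := Real.sqrt_pos.2 (by positivity : 0 < a1 ^ 2 + a2 ^ 2)
    have hW2 := Real.sq_sqrt (by positivity : 0 ≤ a1 ^ 2 + a2 ^ 2)
    have hpu : a1 * p ≤ a2 * -u := by linarith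
    have hsq : (a1 * p) ^ 2 ≤ (a2 * -u) ^ 2 := pow_le_pow_left₀ (by positivity) hpu 2
    have ha1sq : a1 ^ 2 ≤ (-u * Real.sqrt (a1 ^ 2 + a2 ^ 2)) ^ 2 := by
      rw [mul_pow, hW2]
      nlinarith
    rw [add_zero, le_neg, div_le_iff₀ hW]
    exact le_of_sq_le_sq ha1sq (mul_nonneg (by linarith) hW.le)
  · have hp0 : p = 0 := by nlinarith
    nlinarith

lemma not_nonpos_real_of_sq_eq_one_sub_sq {a0 a1 a2 : ℝ} (ha0 : 0 ≤ a0) (ha1 : 0 < a1)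
    (ha2 : 0 ≤ a2) {ζ w : ℂ} (hw : w ^ 2 = 1 - ζ ^ 2) (hw_re : 0 ≤ w.re)
    (hlo : -(a1 / Real.sqrt (a1 ^ 2 + a2 ^ 2)) < ζ.re + ζ.im) (hhi : ζ.re + ζ.im < 1) :
    (a0 : ℂ) + a1 * w + a2 * ζ ∉ {z : ℂ | z.im = 0 ∧ z.re ≤ 0} := by
  rintro ⟨hf_im, hf_re⟩
  have hre := congrArg re hw
  have him := congrArg im hw
  simp only [sq, mul_re, mul_im, sub_re, sub_im, one_re, one_im] at hre him
  simp only [add_re, add_im, mul_re, mul_im, ofReal_re, ofReal_im, zero_mul, sub_zero,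
    add_zero, zero_add] at hf_re hf_im
  refine (add_le_neg_div_of_sq_eq_one_sub_sq ha0 ha1 ha2 hw_re ?_ ?_ hf_im hf_re hhi).not_gt hlo
  · linear_combination hre
  · linear_combination him / 2

theorem statement12 (kp a0 a1 a2 : ℝ) (hkp : 0 < kp)
    (ha0 : 0 ≤ a0) (ha1 : 0 < a1) (ha2 : 0 ≤ a2) :
    ∀ s : ℂ,
      -(a1 * Real.sqrt kp / Real.sqrt (a1 ^ 2 + a2 ^ 2)) < s.im → s.im < Real.sqrt kp →
      (a0 : ℂ) + (a1 : ℂ) * Pf kp s + (a2 : ℂ) * Qf kp s ∉ {z : ℂ | z.im = 0 ∧ z.re ≤ 0} := by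
  intro s hlo hhi
  have hr : 0 < Real.sqrt kp := Real.sqrt_pos.2 hkp
  rw [im_eq_sqrt_mul_Qf hkp, mul_div_right_comm, ← neg_mul, mul_comm] at hlo
  rw [im_eq_sqrt_mul_Qf hkp] at hhi
  rw [Pf_eq_csqrt_one_sub_Qf_sq hkp]
  exact not_nonpos_real_of_sq_eq_one_sub_sq ha0 ha1 ha2 (csqrt_sq _) (re_csqrt_nonneg _)
    (lt_of_mul_lt_mul_left hlo hr.le) (lt_of_mul_lt_mul_left (by rwa [mul_one]) hr.le)
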